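/- For t ∈ ℝ \ ℤ_{≥0}, the t-deformed cumulants are additive with respect to the t-deformed convolution: for all A, B ∈ U = 1 + zℝ⟦z⟧, one has C^t[A ⊞^t B](z) = C^t[A](z) + C^t[B](z), equivalently κ_i^t(A ⊞^t B) = κ_i^t(A) + κ_i^t(B) for every i ∈ ℤ_{≥1}. -/

import Mathlib

open PowerSeries Finset

/-- Falling factorial `(t)_k = t (t-1) ⋯ (t-k+1)`. -/
noncomputable def ffall (t : ℝ) (k : ℕ) : ℝ := ∏ i ∈ Finset.range k, (t - i)

/-- The `t`-deformed convolution of formal power series. -/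
noncomputable def tconv (t : ℝ) (A B : PowerSeries ℝ) : PowerSeries ℝ :=
  PowerSeries.mk fun k => ∑ p ∈ Finset.HasAntidiagonal.antidiagonal k,
    ffall t k / (ffall t p.1 * ffall t p.2)
      * (PowerSeries.coeff p.1 A) * (PowerSeries.coeff p.2 B)

/-- Formal logarithm of a power series (with constant term 1):
`log A = - Σ_{k ≥ 1} (1 - A)^k / k`. -/
noncomputable def flog (A : PowerSeries ℝ) : PowerSeries ℝ :=
  PowerSeries.mk fun n =>
    -∑ k ∈ Finset.range (n + 1), (PowerSeries.coeff (R := ℝ) n ((1 - A) ^ k)) / k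

/-- Power sums of `A ∈ 1 + zℝ⟦z⟧`, defined by `Σ p_k(A) z^k = -z (d/dz) log A(z)`. -/
noncomputable def powSum (A : PowerSeries ℝ) (k : ℕ) : ℝ :=
  -(k : ℝ) * PowerSeries.coeff k (flog A)

/-- `E^t[A](z) = Σ_k (t^k/(t)_k) a_k z^k`. -/
noncomputable def Et (t : ℝ) (A : PowerSeries ℝ) : PowerSeries ℝ :=
  PowerSeries.mk fun k => t ^ k / ffall t k * PowerSeries.coeff k A

/-- The `t`-deformed cumulant transform `C^t[A](z) = -(z/t)(d/dz) log(E^t[A](z))`. -/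
noncomputable def Ct (t : ℝ) (A : PowerSeries ℝ) : PowerSeries ℝ :=
  PowerSeries.mk fun n => -(1 / t) * ((n : ℝ) * PowerSeries.coeff n (flog (Et t A)))

/-- The `i`-th `t`-deformed cumulant of `A`. -/
noncomputable def kappa (t : ℝ) (A : PowerSeries ℝ) (i : ℕ) : ℝ :=
  PowerSeries.coeff i (Ct t A)


/-! `E^t` turns `⊞^t` into the ordinary product, since
`t^k/(t)_k · (t)_k/((t)_i (t)_j) = t^i/(t)_i · t^j/(t)_j` for `i + j = k`; the formal logarithm
turns that product into a sum. For the latter, both sides of `log (P Q) = log P + log Q` have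
constant term `0`, and their derivatives agree by the logarithmic-derivative identity
`(log C)' · C = C'`, which is checked coefficientwise on the truncations
`-Σ_{k ≤ N} (1 - C)^k / k`, where it reduces to a geometric sum. -/

lemma ffall_ne_zero {t : ℝ} (ht : ∀ n : ℕ, t ≠ (n : ℝ)) (k : ℕ) : ffall t k ≠ 0 :=
  prod_ne_zero_iff.2 fun i _ => sub_ne_zero.2 (ht i)

lemma constantCoeff_Et (t : ℝ) {A : PowerSeries ℝ} (hA : constantCoeff A = 1) :
    constantCoeff (Et t A) = 1 := by
  simp [← coeff_zero_eq_constantCoeff_apply, Et, ffall, hA]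

lemma Et_tconv {t : ℝ} (ht : ∀ n : ℕ, t ≠ (n : ℝ)) (A B : PowerSeries ℝ) :
    Et t (tconv t A B) = Et t A * Et t B := by
  ext k
  simp only [Et, tconv, coeff_mul, coeff_mk, mul_sum]
  refine sum_congr rfl fun p hp => ?_
  obtain rfl : p.1 + p.2 = k := mem_antidiagonal.1 hp
  have h₁ := ffall_ne_zero ht p.1
  have h₂ := ffall_ne_zero ht p.2
  have h₁₂ := ffall_ne_zero ht (p.1 + p.2)
  rw [pow_add]
  field_simp

lemma X_pow_dvd_pow_of_constantCoeff_eq_zero {R : Type*} [CommSemiring R] {u : R⟦X⟧}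
    (hu : constantCoeff u = 0) (k : ℕ) : X ^ k ∣ u ^ k :=
  pow_dvd_pow_of_dvd (X_dvd_iff.2 hu) k

-- As in `flog`, the `k = 0` term is `0⁻¹ • 1 = 0`.
noncomputable def logTrunc {K : Type*} [Field K] (u : K⟦X⟧) (N : ℕ) : K⟦X⟧ :=
  -∑ k ∈ range (N + 1), (k : K)⁻¹ • u ^ k

lemma derivative_logTrunc {K : Type*} [Field K] [CharZero K] (u : K⟦X⟧) (N : ℕ) :
    d⁄dX K (logTrunc u N) = -(∑ j ∈ range N, u ^ j) * d⁄dX K u := by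
  rw [logTrunc, map_neg, map_sum, neg_mul, neg_inj, sum_mul, sum_range_succ']
  simp only [pow_zero, Nat.cast_zero, inv_zero, zero_smul, map_zero, add_zero]
  refine sum_congr rfl fun j _ => ?_
  rw [Derivation.map_smul, Derivation.leibniz_pow, Nat.add_sub_cancel,
    ← Nat.cast_smul_eq_nsmul K, smul_smul, inv_mul_cancel₀ (Nat.cast_ne_zero.2 j.succ_ne_zero),
    one_smul, smul_eq_mul]

lemma coeff_flog_eq_coeff_logTrunc {C : PowerSeries ℝ} (hC : constantCoeff C = 1)
    {m N : ℕ} (h : m ≤ N) : coeff m (flog C) = coeff m (logTrunc (1 - C) N) := by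
  have hu : constantCoeff (1 - C) = 0 := by simp [hC]
  simp only [flog, logTrunc, coeff_mk, map_neg, map_sum, coeff_smul, smul_eq_mul,
    inv_mul_eq_div]
  congr 1
  refine sum_subset (range_subset_range.2 (by omega)) fun k _ hk => ?_
  rw [mem_range, not_lt] at hk
  rw [X_pow_dvd_iff.1 (X_pow_dvd_pow_of_constantCoeff_eq_zero hu k) m (by omega), zero_div]

lemma constantCoeff_flog (C : PowerSeries ℝ) : constantCoeff (flog C) = 0 := by
  rw [← coeff_zero_eq_constantCoeff_apply, flog, coeff_mk]
  simp

lemma derivative_flog_mul_self {C : PowerSeries ℝ} (hC : constantCoeff C = 1) :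
    d⁄dX ℝ (flog C) * C = d⁄dX ℝ C := by
  ext n
  have hu : constantCoeff (1 - C) = 0 := by simp [hC]
  have htrunc : coeff n (d⁄dX ℝ (flog C) * C)
      = coeff n (d⁄dX ℝ (logTrunc (1 - C) (n + 1)) * C) := by
    simp only [coeff_mul]
    refine sum_congr rfl fun p hp => ?_
    rw [coeff_derivative, coeff_derivative,
      coeff_flog_eq_coeff_logTrunc hC (N := n + 1) (by have := mem_antidiagonal.1 hp; omega)]
  have hgeom : d⁄dX ℝ (logTrunc (1 - C) (n + 1)) * C
      = d⁄dX ℝ C - (1 - C) ^ (n + 1) * d⁄dX ℝ C := by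
    have hD : d⁄dX ℝ (1 - C) = -d⁄dX ℝ C := by simp
    rw [derivative_logTrunc, hD]
    linear_combination -d⁄dX ℝ C * geom_sum_mul (1 - C) (n + 1)
  have hhigh : coeff n ((1 - C) ^ (n + 1) * d⁄dX ℝ C) = 0 :=
    X_pow_dvd_iff.1 ((X_pow_dvd_pow_of_constantCoeff_eq_zero hu _).mul_right _) n n.lt_succ_self
  rw [htrunc, hgeom, map_sub, hhigh, sub_zero]

lemma flog_mul {P Q : PowerSeries ℝ} (hP : constantCoeff P = 1) (hQ : constantCoeff Q = 1) :
    flog (P * Q) = flog P + flog Q := by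
  have hPQ : constantCoeff (P * Q) = 1 := by rw [map_mul, hP, hQ, mul_one]
  have hPQ_ne : P * Q ≠ 0 := fun h => by simp [h] at hPQ
  refine derivative.ext (mul_right_cancel₀ hPQ_ne ?_) (by simp [constantCoeff_flog])
  rw [derivative_flog_mul_self hPQ, Derivation.leibniz, map_add, smul_eq_mul, smul_eq_mul]
  linear_combination -Q * derivative_flog_mul_self hP - P * derivative_flog_mul_self hQ

/-- Additivity of the `t`-deformed cumulants with respect to `⊞^t`:
`C^t[A ⊞^t B] = C^t[A] + C^t[B]`, equivalently
`κ_i^t(A ⊞^t B) = κ_i^t(A) + κ_i^t(B)` for all `i ≥ 1`. -/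
theorem Ct_tconv_add (t : ℝ) (ht : ∀ n : ℕ, t ≠ (n : ℝ))
    (A B : PowerSeries ℝ)
    (hA : PowerSeries.constantCoeff A = 1) (hB : PowerSeries.constantCoeff B = 1) :
    Ct t (tconv t A B) = Ct t A + Ct t B ∧
    ∀ i : ℕ, 1 ≤ i → kappa t (tconv t A B) i = kappa t A i + kappa t B i := by
  have hCt : Ct t (tconv t A B) = Ct t A + Ct t B := by
    ext n
    simp only [Ct, map_add, coeff_mk, Et_tconv ht,
      flog_mul (constantCoeff_Et t hA) (constantCoeff_Et t hB)]
    ring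
  exact ⟨hCt, fun i _ => by rw [kappa, kappa, kappa, hCt, map_add]⟩
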